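/- Every irreducible T-module W, viewed as a Q-module by restricting the action, is an irreducible Q-module. -/

import Mathlib

open Matrix BigOperators

noncomputable section

variable {X : Type*} [Fintype X] [DecidableEq X]

/-- The adjacency matrix of a graph, over ℂ. -/
def adjMat (G : SimpleGraph X) [DecidableRel G.Adj] : Matrix X X ℂ :=
  Matrix.of fun y z => if G.Adj y z then 1 else 0

/-- The dual idempotent `E*_i`: diagonal 0-1 matrix projecting onto
vertices at distance `i` from `x` (zero for `i` outside the distance range). -/
def Estar (G : SimpleGraph X) (x : X) (i : ℤ) : Matrix X X ℂ :=
  Matrix.diagonal fun y => if (G.dist x y : ℤ) = i then 1 else 0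

/-- The lowering matrix `L = Σ_{i=1}^D E*_{i-1} A E*_i`. -/
def lowerM (G : SimpleGraph X) [DecidableRel G.Adj] (x : X) (D : ℕ) : Matrix X X ℂ :=
  ∑ i ∈ Finset.Icc 1 D, Estar G x ((i : ℤ) - 1) * adjMat G * Estar G x i

/-- The flat matrix `F = Σ_{i=0}^D E*_i A E*_i`. -/
def flatM (G : SimpleGraph X) [DecidableRel G.Adj] (x : X) (D : ℕ) : Matrix X X ℂ :=
  ∑ i ∈ Finset.range (D + 1), Estar G x i * adjMat G * Estar G x i

/-- The raising matrix `R = Σ_{i=0}^{D-1} E*_{i+1} A E*_i`. -/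
def raiseM (G : SimpleGraph X) [DecidableRel G.Adj] (x : X) (D : ℕ) : Matrix X X ℂ :=
  ∑ i ∈ Finset.range D, Estar G x ((i : ℤ) + 1) * adjMat G * Estar G x i

/-- The subconstituent (Terwilliger) algebra `T`, generated by `A` and the `E*_i`. -/
def Talg (G : SimpleGraph X) [DecidableRel G.Adj] (x : X) (D : ℕ) :
    Subalgebra ℂ (Matrix X X ℂ) :=
  Algebra.adjoin ℂ (insert (adjMat G) (Estar G x '' Set.Icc (0 : ℤ) (D : ℤ)))

/-- The quantum adjacency algebra `Q`, generated by `L, F, R`. -/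
def Qalg (G : SimpleGraph X) [DecidableRel G.Adj] (x : X) (D : ℕ) :
    Subalgebra ℂ (Matrix X X ℂ) :=
  Algebra.adjoin ℂ {lowerM G x D, flatM G x D, raiseM G x D}

/-- The dual adjacency algebra `M*`, the span of the `E*_i`. -/
def Mstar (G : SimpleGraph X) (x : X) (D : ℕ) : Submodule ℂ (Matrix X X ℂ) :=
  Submodule.span ℂ (Estar G x '' Set.Icc (0 : ℤ) (D : ℤ))

/-- The graded component `T_n = Σ_i E*_{i+n} T E*_i`. -/
def Tgraded (G : SimpleGraph X) [DecidableRel G.Adj] (x : X) (D : ℕ) (n : ℤ) :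
    Submodule ℂ (Matrix X X ℂ) :=
  Submodule.span ℂ
    {M | ∃ i : ℤ, ∃ S ∈ Talg G x D, M = Estar G x (i + n) * S * Estar G x i}

/-- The graded component `Q_n = Q ∩ T_n`. -/
def Qgraded (G : SimpleGraph X) [DecidableRel G.Adj] (x : X) (D : ℕ) (n : ℤ) :
    Submodule ℂ (Matrix X X ℂ) :=
  (Subalgebra.toSubmodule (Qalg G x D)) ⊓ Tgraded G x D n

/-- `W` is an irreducible module for the algebra `A₀ ⊆ Mat_X(ℂ)` (acting on `V = ℂ^X`
by matrix-vector multiplication). -/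
def IsIrredMod (A₀ : Subalgebra ℂ (Matrix X X ℂ)) (W : Submodule ℂ (X → ℂ)) : Prop :=
  (∀ S ∈ A₀, ∀ w ∈ W, S.mulVec w ∈ W) ∧ W ≠ ⊥ ∧
    ∀ W' : Submodule ℂ (X → ℂ), W' ≤ W →
      (∀ S ∈ A₀, ∀ w ∈ W', S.mulVec w ∈ W') → W' = ⊥ ∨ W' = W

/-- The subspace `E*_i W`. -/
def Emap (G : SimpleGraph X) (x : X) (i : ℤ) (W : Submodule ℂ (X → ℂ)) :
    Submodule ℂ (X → ℂ) :=
  W.map (Estar G x i).mulVecLin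

/-- The subspace `P · W` spanned by all `S w`, `S ∈ P`, `w ∈ W`. -/
def actSp (P : Submodule ℂ (Matrix X X ℂ)) (W : Submodule ℂ (X → ℂ)) :
    Submodule ℂ (X → ℂ) :=
  Submodule.span ℂ {v | ∃ S ∈ P, ∃ w ∈ W, v = S.mulVec w}

/-- The statement: `W` has endpoint `r` and diameter `d`, i.e. `E*_i W ≠ 0`
iff `r ≤ i ≤ r + d`. -/
def HasEndpointDiam (G : SimpleGraph X) (x : X) (W : Submodule ℂ (X → ℂ))
    (r d : ℕ) : Prop :=
  ∀ i : ℤ, Emap G x i W ≠ ⊥ ↔ ((r : ℤ) ≤ i ∧ i ≤ (r : ℤ) + (d : ℤ))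

/-- `σ` restricts to an isomorphism of `Q`-modules from `U` to `W`. -/
def IsQIso (G : SimpleGraph X) [DecidableRel G.Adj] (x : X) (D : ℕ)
    (U W : Submodule ℂ (X → ℂ)) (σ : (X → ℂ) →ₗ[ℂ] (X → ℂ)) : Prop :=
  U.map σ = W ∧ (∀ u ∈ U, σ u = 0 → u = 0) ∧
    ∀ S ∈ Qalg G x D, ∀ u ∈ U, σ (S.mulVec u) = S.mulVec (σ u)

/-- `σ` restricts to an isomorphism of `T`-modules from `U` to `W`. -/
def IsTIso (G : SimpleGraph X) [DecidableRel G.Adj] (x : X) (D : ℕ)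
    (U W : Submodule ℂ (X → ℂ)) (σ : (X → ℂ) →ₗ[ℂ] (X → ℂ)) : Prop :=
  U.map σ = W ∧ (∀ u ∈ U, σ u = 0 → u = 0) ∧
    ∀ S ∈ Talg G x D, ∀ u ∈ U, σ (S.mulVec u) = S.mulVec (σ u)

/-- `σ` restricts to a quasi-isomorphism of `T`-modules from `U` to `W`,
with endpoint shift `n`. -/
def IsQuasiIso (G : SimpleGraph X) [DecidableRel G.Adj] (x : X) (D : ℕ)
    (U W : Submodule ℂ (X → ℂ)) (σ : (X → ℂ) →ₗ[ℂ] (X → ℂ)) (n : ℤ) : Prop :=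
  U.map σ = W ∧ (∀ u ∈ U, σ u = 0 → u = 0) ∧
    (∀ u ∈ U, σ ((lowerM G x D).mulVec u) = (lowerM G x D).mulVec (σ u)) ∧
    (∀ u ∈ U, σ ((flatM G x D).mulVec u) = (flatM G x D).mulVec (σ u)) ∧
    (∀ u ∈ U, σ ((raiseM G x D).mulVec u) = (raiseM G x D).mulVec (σ u)) ∧
    ∀ i : ℤ, ∀ u ∈ U, σ ((Estar G x i).mulVec u) = (Estar G x (i + n)).mulVec (σ u)

end

/-!
Let `W' ⊆ W` be a nonzero `Q`-submodule and `P` the orthogonal projection onto `W'`. Since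
`Lᴴ = R` and `Fᴴ = F`, the matrix `P` commutes with `L`, `F` and `R`. These are homogeneous of
degrees `-1`, `0`, `1` for the grading by distance from `x`, so every graded part `P_n` of `P`
commutes with them, hence with `A = L + F + R`, and `E*_{i+n} P_n = P_n E*_i`. For `n ≠ 0` the
kernel of `P_n` on `W` is therefore a `T`-submodule; it is nonzero because `P_n` is nilpotent, so
`P_n` vanishes on `W`. Thus `P` acts on `W` as `P_0`, which commutes with every `E*_i`; hence `W'`
is stable under the `E*_i` and under `A`, i.e. it is a `T`-submodule of `W`, and `W' = W`.
-/

open Matrix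

section Projection

variable {𝕜 n : Type*} [RCLike 𝕜] [Fintype n]

theorem Matrix.exists_isHermitian_projection [DecidableEq n] (K : Submodule 𝕜 (n → 𝕜)) :
    ∃ P : Matrix n n 𝕜, P.IsHermitian ∧ (∀ v, P *ᵥ v ∈ K) ∧ ∀ v ∈ K, P *ᵥ v = v := by
  set K' : Submodule 𝕜 (EuclideanSpace 𝕜 n) :=
    K.comap (WithLp.linearEquiv 2 𝕜 (n → 𝕜)).toLinearMap
  set P : Matrix n n 𝕜 := toEuclideanLin.symm K'.starProjection
  have hP v : WithLp.toLp 2 (P *ᵥ v) = K'.starProjection (WithLp.toLp 2 v) := by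
    rw [← toLpLin_apply, LinearEquiv.apply_symm_apply]
    rfl
  have hK' v : WithLp.toLp 2 v ∈ K' ↔ v ∈ K := Iff.rfl
  refine ⟨P, ?_, fun v => ?_, fun v hv => ?_⟩
  · apply toEuclideanLin.injective
    rw [toEuclideanLin_conjTranspose_eq_adjoint, LinearEquiv.apply_symm_apply]
    exact K'.starProjection_isSymmetric.adjoint_eq
  · rw [← hK', hP]
    exact K'.starProjection_apply_mem _
  · apply WithLp.toLp_injective 2
    rw [hP, K'.starProjection_eq_self_iff]
    exact (hK' v).2 hv

/-- `P S P = S P` says that `S` preserves the range of `P`; applied to `S` and `Sᴴ` it gives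
`P S = P S P = S P`. -/
theorem Matrix.commute_of_isHermitian_projection {P S : Matrix n n 𝕜} {K : Submodule 𝕜 (n → 𝕜)}
    (hP : P.IsHermitian) (hPK : ∀ v, P *ᵥ v ∈ K) (hPfix : ∀ v ∈ K, P *ᵥ v = v)
    (hS : ∀ v ∈ K, S *ᵥ v ∈ K) (hSH : ∀ v ∈ K, Sᴴ *ᵥ v ∈ K) : Commute P S := by
  have key (T : Matrix n n 𝕜) (hT : ∀ v ∈ K, T *ᵥ v ∈ K) : P * T * P = T * P :=
    mulVec_injective <| funext fun v => by
      simp only [← mulVec_mulVec]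
      exact hPfix _ (hT _ (hPK v))
  calc P * S = (Sᴴ * P)ᴴ := by rw [conjTranspose_mul, hP.eq, conjTranspose_conjTranspose]
    _ = (P * Sᴴ * P)ᴴ := by rw [key Sᴴ hSH]
    _ = P * S * P := by simp only [conjTranspose_mul, hP.eq, conjTranspose_conjTranspose, mul_assoc]
    _ = S * P := key S hS

end Projection

section Invariance

variable {R n : Type*} [CommRing R] [Fintype n] [DecidableEq n]

theorem Matrix.mulVec_mem_of_mem_adjoin {s : Set (Matrix n n R)} {U : Submodule R (n → R)}
    (hs : ∀ S ∈ s, ∀ u ∈ U, S *ᵥ u ∈ U) {S : Matrix n n R} (hS : S ∈ Algebra.adjoin R s) :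
    ∀ u ∈ U, S *ᵥ u ∈ U := by
  induction hS using Algebra.adjoin_induction with
  | mem S hS => exact hs S hS
  | algebraMap r =>
    intro u hu
    rw [Algebra.algebraMap_eq_smul_one, smul_mulVec, one_mulVec]
    exact U.smul_mem r hu
  | add S T _ _ hS hT => exact fun u hu => by rw [add_mulVec]; exact U.add_mem (hS u hu) (hT u hu)
  | mul S T _ _ hS hT => exact fun u hu => by rw [← mulVec_mulVec]; exact hS _ (hT u hu)

theorem Matrix.exists_ne_zero_mulVec_eq_zero_of_pow_eq_zero {N : Matrix n n R}
    {U : Submodule R (n → R)} (hU : U ≠ ⊥) (hNU : ∀ u ∈ U, N *ᵥ u ∈ U) {k : ℕ}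
    (hk : N ^ k = 0) : ∃ u ∈ U, u ≠ 0 ∧ N *ᵥ u = 0 := by
  obtain ⟨u, hu, hu0⟩ := (Submodule.ne_bot_iff U).1 hU
  have hku : N ^ k *ᵥ u = 0 := by rw [hk, zero_mulVec]
  clear hk
  induction k generalizing u with
  | zero => exact absurd (by simpa using hku) hu0
  | succ k ih =>
    by_cases hNu : N *ᵥ u = 0
    · exact ⟨u, hu, hu0, hNu⟩
    · exact ih (N *ᵥ u) (hNU u hu) hNu (by rwa [mulVec_mulVec, ← pow_succ])

end Invariance

section GradedPart

variable {X R : Type*} (G : SimpleGraph X) (x : X)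

/-- For `M ∈ T` this is the component of `M` in the paper's `T_n = Σ_i E*_{i+n} T E*_i`. -/
noncomputable def gradedPart [Zero R] (M : Matrix X X R) (n : ℤ) : Matrix X X R :=
  Matrix.of fun y z => if (G.dist x y : ℤ) = G.dist x z + n then M y z else 0

def IsHomogeneous [Zero R] (M : Matrix X X R) (n : ℤ) : Prop :=
  ∀ y z, M y z ≠ 0 → (G.dist x y : ℤ) = G.dist x z + n

variable {G x}

theorem isHomogeneous_gradedPart [Zero R] (M : Matrix X X R) (n : ℤ) :
    IsHomogeneous G x (gradedPart G x M n) n := fun y z h => by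
  by_contra hyz
  exact h (if_neg hyz)

theorem conjTranspose_gradedPart [AddMonoid R] [StarAddMonoid R] (M : Matrix X X R) (n : ℤ) :
    (gradedPart G x M n)ᴴ = gradedPart G x Mᴴ (-n) := by
  ext y z
  simp only [conjTranspose_apply, gradedPart, of_apply]
  by_cases h : (G.dist x z : ℤ) = G.dist x y + n
  · rw [if_pos h, if_pos (by omega)]
  · rw [if_neg h, if_neg (by omega), star_zero]

theorem IsHomogeneous.eq_zero [Zero R] {M : Matrix X X R} {n : ℤ} {D : ℕ}
    (hD : ∀ y, G.dist x y ≤ D) (hM : IsHomogeneous G x M n) (hn : (D : ℤ) < |n|) : M = 0 := by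
  ext y z
  by_contra h
  have := hM y z h
  have := hD y
  have := hD z
  rw [lt_abs] at hn
  omega

theorem sum_gradedPart [AddCommMonoid R] {D : ℕ} (hD : ∀ y, G.dist x y ≤ D)
    (M : Matrix X X R) :
    ∑ n ∈ Finset.Icc (-(D : ℤ)) D, gradedPart G x M n = M := by
  ext y z
  have := hD y
  have := hD z
  rw [Matrix.sum_apply, Finset.sum_eq_single ((G.dist x y : ℤ) - G.dist x z)]
  · simp [gradedPart]
  · intro n _ hn
    exact if_neg (by omega)
  · intro hn
    exact absurd (Finset.mem_Icc.2 ⟨by omega, by omega⟩) hn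

theorem adjMat_eq_sum_gradedPart [DecidableRel G.Adj] :
    adjMat G = gradedPart G x (adjMat G) (-1) + gradedPart G x (adjMat G) 0 +
      gradedPart G x (adjMat G) 1 := by
  ext y z
  simp only [Matrix.add_apply, gradedPart, of_apply]
  by_cases h : G.Adj y z
  · rcases h.diff_dist_adj (u := x) with h' | h' | h' <;> split_ifs <;> first | omega | simp
  · simp [adjMat, h]

theorem isHomogeneous_one [DecidableEq X] [Zero R] [One R] :
    IsHomogeneous G x (1 : Matrix X X R) 0 := fun y z h => by
  by_contra hyz
  exact h (one_apply_ne (by rintro rfl; simp at hyz))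

variable [Fintype X]

theorem IsHomogeneous.mul [NonUnitalNonAssocSemiring R] {M N : Matrix X X R} {a b : ℤ}
    (hM : IsHomogeneous G x M a) (hN : IsHomogeneous G x N b) :
    IsHomogeneous G x (M * N) (a + b) := fun y z h => by
  obtain ⟨w, -, hw⟩ := Finset.exists_ne_zero_of_sum_ne_zero h
  have := hM y w (left_ne_zero_of_mul hw)
  have := hN w z (right_ne_zero_of_mul hw)
  omega

theorem gradedPart_mul_of_isHomogeneous [NonUnitalNonAssocSemiring R] (M : Matrix X X R)
    {N : Matrix X X R} {d : ℤ} (hN : IsHomogeneous G x N d) (n : ℤ) :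
    gradedPart G x M n * N = gradedPart G x (M * N) (n + d) := by
  ext y z
  simp only [mul_apply, gradedPart, of_apply, ite_mul, zero_mul]
  calc _ = ∑ w, if (G.dist x y : ℤ) = G.dist x z + (n + d) then M y w * N w z else 0 :=
        Finset.sum_congr rfl fun w _ => by
          by_cases hw : N w z = 0
          · simp [hw]
          · have := hN w z hw
            exact if_congr (by omega) rfl rfl
    _ = _ := by rw [Finset.sum_ite_irrel, Finset.sum_const_zero]

theorem mul_gradedPart_of_isHomogeneous [NonUnitalNonAssocSemiring R] (M : Matrix X X R)
    {N : Matrix X X R} {d : ℤ} (hN : IsHomogeneous G x N d) (n : ℤ) :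
    N * gradedPart G x M n = gradedPart G x (N * M) (n + d) := by
  ext y z
  simp only [mul_apply, gradedPart, of_apply, mul_ite, mul_zero]
  calc _ = ∑ w, if (G.dist x y : ℤ) = G.dist x z + (n + d) then N y w * M w z else 0 :=
        Finset.sum_congr rfl fun w _ => by
          by_cases hw : N y w = 0
          · simp [hw]
          · have := hN y w hw
            exact if_congr (by omega) rfl rfl
    _ = _ := by rw [Finset.sum_ite_irrel, Finset.sum_const_zero]

theorem Commute.gradedPart [NonUnitalNonAssocSemiring R] {M N : Matrix X X R} {d : ℤ}
    (h : Commute M N) (hN : IsHomogeneous G x N d) (n : ℤ) :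
    Commute (gradedPart G x M n) N := by
  rw [Commute, SemiconjBy, gradedPart_mul_of_isHomogeneous M hN,
    mul_gradedPart_of_isHomogeneous M hN, h.eq]

variable [DecidableEq X]

theorem IsHomogeneous.pow [Semiring R] {M : Matrix X X R} {a : ℤ} (hM : IsHomogeneous G x M a) :
    ∀ k : ℕ, IsHomogeneous G x (M ^ k) (k * a)
  | 0 => by simpa using isHomogeneous_one
  | k + 1 => by
    rw [pow_succ, Nat.cast_succ, add_mul, one_mul]
    exact (hM.pow k).mul hM

end GradedPart

theorem adjMat_conjTranspose {X : Type*} {G : SimpleGraph X} [DecidableRel G.Adj] :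
    (adjMat G)ᴴ = adjMat G := by
  ext y z
  simp [adjMat, conjTranspose_apply, G.adj_comm, apply_ite star]

section Subconstituent

variable {X : Type*} [Fintype X] [DecidableEq X] {G : SimpleGraph X} {x : X} {D : ℕ}

theorem Estar_mul_apply (i : ℤ) (M : Matrix X X ℂ) (y z : X) :
    (Estar G x i * M) y z = if (G.dist x y : ℤ) = i then M y z else 0 := by
  simp [Estar, diagonal_mul]

theorem mul_Estar_apply (i : ℤ) (M : Matrix X X ℂ) (y z : X) :
    (M * Estar G x i) y z = if (G.dist x z : ℤ) = i then M y z else 0 := by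
  simp [Estar, mul_diagonal]

theorem Estar_mul_gradedPart (M : Matrix X X ℂ) (n j : ℤ) :
    Estar G x (j + n) * gradedPart G x M n = gradedPart G x M n * Estar G x j := by
  ext y z
  simp only [Estar_mul_apply, mul_Estar_apply, gradedPart, of_apply]
  split_ifs <;> first | rfl | omega

theorem gradedPart_eq_sum (hD : ∀ y, G.dist x y ≤ D) (M : Matrix X X ℂ) (n : ℤ) (s : Finset ℕ)
    (hs : ∀ i : ℕ, i ≤ D → 0 ≤ (i : ℤ) + n → (i : ℤ) + n ≤ D → i ∈ s) :
    gradedPart G x M n = ∑ i ∈ s, Estar G x (i + n) * M * Estar G x i := by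
  ext y z
  rw [Matrix.sum_apply, Finset.sum_eq_single (G.dist x z)]
  · simp [mul_Estar_apply, Estar_mul_apply, gradedPart]
  · intro i _ hi
    exact (mul_Estar_apply _ _ _ _).trans (if_neg (by omega))
  · intro hz
    rw [mul_Estar_apply, Estar_mul_apply, if_pos rfl, if_neg]
    intro hy
    exact hz (hs _ (hD z) (by omega) (by have := hD y; omega))

theorem gradedPart_mulVec_mem (hD : ∀ y, G.dist x y ≤ D) {W : Submodule ℂ (X → ℂ)}
    (hE : ∀ j, ∀ w ∈ W, Estar G x j *ᵥ w ∈ W) {M : Matrix X X ℂ} (hM : ∀ w ∈ W, M *ᵥ w ∈ W)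
    (n : ℤ) : ∀ w ∈ W, gradedPart G x M n *ᵥ w ∈ W := by
  intro w hw
  rw [gradedPart_eq_sum hD M n (Finset.range (D + 1)) fun i hi _ _ => by simpa using hi,
    sum_mulVec]
  refine W.sum_mem fun i _ => ?_
  simp only [← mulVec_mulVec]
  exact hE _ _ (hM _ (hE _ _ hw))

variable [DecidableRel G.Adj]

theorem lowerM_eq_gradedPart (hD : ∀ y, G.dist x y ≤ D) :
    lowerM G x D = gradedPart G x (adjMat G) (-1) := by
  rw [gradedPart_eq_sum hD _ _ (Finset.Icc 1 D) fun i hi h _ => Finset.mem_Icc.2 ⟨by omega, hi⟩]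
  simp only [lowerM, ← sub_eq_add_neg]

theorem flatM_eq_gradedPart (hD : ∀ y, G.dist x y ≤ D) :
    flatM G x D = gradedPart G x (adjMat G) 0 := by
  rw [gradedPart_eq_sum hD _ _ (Finset.range (D + 1)) fun i hi _ _ => by simpa using hi]
  simp only [flatM, add_zero]

theorem raiseM_eq_gradedPart (hD : ∀ y, G.dist x y ≤ D) :
    raiseM G x D = gradedPart G x (adjMat G) 1 := by
  rw [gradedPart_eq_sum hD _ _ (Finset.range D) fun i _ _ h => by simp; omega]
  rfl

theorem adjMat_eq_lowerM_add_flatM_add_raiseM (hD : ∀ y, G.dist x y ≤ D) :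
    adjMat G = lowerM G x D + flatM G x D + raiseM G x D := by
  rw [lowerM_eq_gradedPart hD, flatM_eq_gradedPart hD, raiseM_eq_gradedPart hD]
  exact adjMat_eq_sum_gradedPart

theorem lowerM_conjTranspose (hD : ∀ y, G.dist x y ≤ D) : (lowerM G x D)ᴴ = raiseM G x D := by
  rw [lowerM_eq_gradedPart hD, raiseM_eq_gradedPart hD, conjTranspose_gradedPart,
    adjMat_conjTranspose, neg_neg]

theorem raiseM_conjTranspose (hD : ∀ y, G.dist x y ≤ D) : (raiseM G x D)ᴴ = lowerM G x D := by
  rw [← lowerM_conjTranspose hD, conjTranspose_conjTranspose]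

theorem flatM_conjTranspose (hD : ∀ y, G.dist x y ≤ D) : (flatM G x D)ᴴ = flatM G x D := by
  rw [flatM_eq_gradedPart hD, conjTranspose_gradedPart, adjMat_conjTranspose, neg_zero]

end Subconstituent

section Algebras

variable {X : Type*} [Fintype X] [DecidableEq X] {G : SimpleGraph X} [DecidableRel G.Adj]
  {x : X} {D : ℕ}

theorem Estar_mem_Talg (hD : ∀ y, G.dist x y ≤ D) (j : ℤ) : Estar G x j ∈ Talg G x D := by
  by_cases hj : j ∈ Set.Icc 0 (D : ℤ)
  · exact Algebra.subset_adjoin (Set.mem_insert_of_mem _ ⟨j, hj, rfl⟩)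
  · convert (Talg G x D).zero_mem
    ext y z
    have := hD y
    simp only [Estar, diagonal_apply, Matrix.zero_apply, Set.mem_Icc] at hj ⊢
    split_ifs <;> first | rfl | omega

theorem adjMat_mem_Talg : adjMat G ∈ Talg G x D :=
  Algebra.subset_adjoin (Set.mem_insert _ _)

theorem gradedPart_mem_Talg (hD : ∀ y, G.dist x y ≤ D) {M : Matrix X X ℂ} (hM : M ∈ Talg G x D)
    (n : ℤ) : gradedPart G x M n ∈ Talg G x D := by
  rw [gradedPart_eq_sum hD M n (Finset.range (D + 1)) fun i hi _ _ => by simpa using hi]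
  exact Subalgebra.sum_mem _ fun i _ =>
    mul_mem (mul_mem (Estar_mem_Talg hD _) hM) (Estar_mem_Talg hD _)

theorem Qalg_le_Talg (hD : ∀ y, G.dist x y ≤ D) : Qalg G x D ≤ Talg G x D := by
  refine Algebra.adjoin_le ?_
  rintro _ (rfl | rfl | rfl)
  · rw [lowerM_eq_gradedPart hD]
    exact gradedPart_mem_Talg hD adjMat_mem_Talg _
  · rw [flatM_eq_gradedPart hD]
    exact gradedPart_mem_Talg hD adjMat_mem_Talg _
  · rw [raiseM_eq_gradedPart hD]
    exact gradedPart_mem_Talg hD adjMat_mem_Talg _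

theorem lowerM_mem_Qalg : lowerM G x D ∈ Qalg G x D :=
  Algebra.subset_adjoin (by simp)

theorem flatM_mem_Qalg : flatM G x D ∈ Qalg G x D :=
  Algebra.subset_adjoin (by simp)

theorem raiseM_mem_Qalg : raiseM G x D ∈ Qalg G x D :=
  Algebra.subset_adjoin (by simp)

theorem adjMat_mem_Qalg (hD : ∀ y, G.dist x y ≤ D) : adjMat G ∈ Qalg G x D := by
  rw [adjMat_eq_lowerM_add_flatM_add_raiseM hD]
  exact add_mem (add_mem lowerM_mem_Qalg flatM_mem_Qalg) raiseM_mem_Qalg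

theorem mulVec_mem_of_mem_Talg {U : Submodule ℂ (X → ℂ)} (hA : ∀ u ∈ U, adjMat G *ᵥ u ∈ U)
    (hE : ∀ j, ∀ u ∈ U, Estar G x j *ᵥ u ∈ U) {S : Matrix X X ℂ} (hS : S ∈ Talg G x D) :
    ∀ u ∈ U, S *ᵥ u ∈ U :=
  mulVec_mem_of_mem_adjoin (by rintro S (rfl | ⟨j, -, rfl⟩); exacts [hA, hE j]) hS

theorem commute_gradedPart_adjMat (hD : ∀ y, G.dist x y ≤ D) {M : Matrix X X ℂ}
    (hL : Commute M (lowerM G x D)) (hF : Commute M (flatM G x D))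
    (hR : Commute M (raiseM G x D)) (n : ℤ) : Commute (gradedPart G x M n) (adjMat G) := by
  rw [lowerM_eq_gradedPart hD] at hL
  rw [flatM_eq_gradedPart hD] at hF
  rw [raiseM_eq_gradedPart hD] at hR
  rw [adjMat_eq_sum_gradedPart (x := x)]
  exact ((hL.gradedPart (isHomogeneous_gradedPart _ _) n).add_right
    (hF.gradedPart (isHomogeneous_gradedPart _ _) n)).add_right
    (hR.gradedPart (isHomogeneous_gradedPart _ _) n)

theorem gradedPart_mulVec_eq_zero (hD : ∀ y, G.dist x y ≤ D) {W : Submodule ℂ (X → ℂ)}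
    (hW : IsIrredMod (Talg G x D) W) {M : Matrix X X ℂ} (hMW : ∀ w ∈ W, M *ᵥ w ∈ W) {n : ℤ}
    (hMA : Commute (gradedPart G x M n) (adjMat G)) (hn : n ≠ 0) :
    ∀ w ∈ W, gradedPart G x M n *ᵥ w = 0 := by
  set N := gradedPart G x M n
  have hE j : ∀ w ∈ W, Estar G x j *ᵥ w ∈ W := hW.1 _ (Estar_mem_Talg hD j)
  have hNW := gradedPart_mulVec_mem hD hE hMW n
  set K := W ⊓ LinearMap.ker N.mulVecLin
  have hK v : v ∈ K ↔ v ∈ W ∧ N *ᵥ v = 0 := Iff.rfl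
  have hKT : ∀ S ∈ Talg G x D, ∀ v ∈ K, S *ᵥ v ∈ K := by
    refine fun S hS => mulVec_mem_of_mem_Talg (fun v hv => ?_) (fun j v hv => ?_) hS
    · rw [hK, mulVec_mulVec, hMA.eq, ← mulVec_mulVec, ((hK v).1 hv).2, mulVec_zero]
      exact ⟨hW.1 _ adjMat_mem_Talg v ((hK v).1 hv).1, rfl⟩
    · rw [hK, mulVec_mulVec, ← Estar_mul_gradedPart, ← mulVec_mulVec, ((hK v).1 hv).2,
        mulVec_zero]
      exact ⟨hE j v ((hK v).1 hv).1, rfl⟩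
  have hNnil : N ^ (D + 1) = 0 := by
    refine ((isHomogeneous_gradedPart M n).pow (D + 1)).eq_zero hD ?_
    have := Int.one_le_abs hn
    rw [abs_mul, Nat.abs_cast]
    push_cast
    nlinarith
  obtain ⟨u, huW, hu0, hNu⟩ := exists_ne_zero_mulVec_eq_zero_of_pow_eq_zero hW.2.1 hNW hNnil
  rcases hW.2.2 K inf_le_left hKT with hK0 | hKW
  · exact absurd ((Submodule.mem_bot ℂ).1 (hK0 ▸ (hK u).2 ⟨huW, hNu⟩)) hu0
  · exact fun w hw => ((hK w).1 (hKW ▸ hw)).2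

theorem mulVec_mem_of_Qalg_invariant (hD : ∀ y, G.dist x y ≤ D) {W W' : Submodule ℂ (X → ℂ)}
    (hW : IsIrredMod (Talg G x D) W) (hW'W : W' ≤ W)
    (hW' : ∀ S ∈ Qalg G x D, ∀ w ∈ W', S *ᵥ w ∈ W') :
    ∀ S ∈ Talg G x D, ∀ w ∈ W', S *ᵥ w ∈ W' := by
  obtain ⟨P, hPH, hPW', hPfix⟩ := exists_isHermitian_projection W'
  have hPcomm {S} (hS : S ∈ Qalg G x D) (hSH : Sᴴ ∈ Qalg G x D) : Commute P S :=
    commute_of_isHermitian_projection hPH hPW' hPfix (hW' S hS) (hW' _ hSH)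
  have hPA := commute_gradedPart_adjMat hD
    (hPcomm lowerM_mem_Qalg (by rw [lowerM_conjTranspose hD]; exact raiseM_mem_Qalg))
    (hPcomm flatM_mem_Qalg (by rw [flatM_conjTranspose hD]; exact flatM_mem_Qalg))
    (hPcomm raiseM_mem_Qalg (by rw [raiseM_conjTranspose hD]; exact lowerM_mem_Qalg))
  have hP0 : ∀ w ∈ W, P *ᵥ w = gradedPart G x P 0 *ᵥ w := fun w hw => by
    conv_lhs => rw [← sum_gradedPart hD P, sum_mulVec]
    refine Finset.sum_eq_single 0 (fun n _ hn => ?_) (by simp)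
    exact gradedPart_mulVec_eq_zero hD hW (fun v _ => hW'W (hPW' v)) (hPA n) hn w hw
  refine fun S hS => mulVec_mem_of_mem_Talg (hW' _ (adjMat_mem_Qalg hD)) (fun j w hw => ?_) hS
  have hEw : Estar G x j *ᵥ w ∈ W := hW.1 _ (Estar_mem_Talg hD j) _ (hW'W hw)
  suffices Estar G x j *ᵥ w = P *ᵥ (Estar G x j *ᵥ w) from this ▸ hPW' _
  calc Estar G x j *ᵥ w = (Estar G x (j + 0) * gradedPart G x P 0) *ᵥ w := by
        rw [← mulVec_mulVec, ← hP0 w (hW'W hw), hPfix w hw, add_zero]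
    _ = P *ᵥ (Estar G x j *ᵥ w) := by rw [Estar_mul_gradedPart, ← mulVec_mulVec, hP0 _ hEw]

end Algebras

theorem stmt13_general {X : Type*} [Fintype X] [DecidableEq X]
    (G : SimpleGraph X) [DecidableRel G.Adj] (x : X) (D : ℕ)
    (hD : ∀ y, G.dist x y ≤ D)
    (W : Submodule ℂ (X → ℂ)) (hW : IsIrredMod (Talg G x D) W) :
    IsIrredMod (Qalg G x D) W :=
  ⟨fun S hS => hW.1 S (Qalg_le_Talg hD hS), hW.2.1,
    fun W' hW'W hW' => hW.2.2 W' hW'W (mulVec_mem_of_Qalg_invariant hD hW hW'W hW')⟩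

theorem stmt13 {X : Type*} [Fintype X] [DecidableEq X]
    (G : SimpleGraph X) [DecidableRel G.Adj] (hG : G.Connected) (x : X) (D : ℕ)
    (hD : ∀ y, G.dist x y ≤ D) (hD2 : ∃ y, G.dist x y = D)
    (W : Submodule ℂ (X → ℂ)) (hW : IsIrredMod (Talg G x D) W) :
    IsIrredMod (Qalg G x D) W :=
  stmt13_general G x D hD W hW
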